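/- arXiv:1907.06146 — 7 statements merged into one kernel-verified Lean document; each statement's English description precedes it below -/
import Mathlib

section
/- In a Euclidean space, if p, q, r are three points such that the angle ∠rpq (at vertex p) is strictly less than 60 degrees and dist(p,r) < dist(p,q), then dist(r,q) < dist(p,q). -/
open EuclideanGeometry Real

theorem stmt_0 {d : ℕ} (p q r : EuclideanSpace ℝ (Fin d))
    (hangle : ∠ r p q < π / 3) (hdist : dist p r < dist p q) :
    dist r q < dist p q := by
  have hrp : r ≠ p := by
    rintro rfl
    rw [EuclideanGeometry.angle_self_left] at hangle
    linarith [Real.pi_pos]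
  have hpr : 0 < dist p r := by
    rw [dist_pos]; exact fun h => hrp h.symm
  have hcos : (1:ℝ)/2 < Real.cos (∠ r p q) := by
    have h1 := EuclideanGeometry.angle_nonneg r p q
    have := Real.strictAntiOn_cos
      ⟨h1, (EuclideanGeometry.angle_le_pi r p q)⟩
      (⟨by positivity, by linarith [Real.pi_pos]⟩ : π/3 ∈ Set.Icc 0 π) hangle
    rwa [Real.cos_pi_div_three] at this
  have hlc := EuclideanGeometry.law_cos r p q
  rw [dist_comm r p, dist_comm q p] at hlc
  nlinarith [dist_nonneg (x := p) (y := q), mul_pos hpr (sub_pos.2 hdist), mul_pos (mul_pos hpr (lt_trans hpr hdist)) (show (0:ℝ) < Real.cos (∠ r p q) - 1/2 by linarith)]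
end

section
/- Let p, q, s be points in a Euclidean space such that ∠spq < π/3 and dist(p,s) < dist(p,q). Then dist(s,q) < dist(p,q), i.e., moving from p to s is a monotonic step toward q. -/
open EuclideanGeometry Real

theorem stmt_2 {d : ℕ} (p q s : EuclideanSpace ℝ (Fin d))
    (hangle : ∠ s p q < π / 3) (hdist : dist p s < dist p q) :
    dist s q < dist p q := by
  have hsp : s ≠ p := by
    rintro rfl
    rw [EuclideanGeometry.angle_self_left] at hangle
    linarith [Real.pi_pos]
  have hps : 0 < dist s p := dist_pos.2 hsp
  have hcos : (1:ℝ)/2 < Real.cos (∠ s p q) := by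
    have h0 : 0 ≤ ∠ s p q := EuclideanGeometry.angle_nonneg _ _ _
    have := Real.cos_lt_cos_of_nonneg_of_le_pi h0 (by linarith [Real.pi_pos] : π/3 ≤ π) hangle
    rwa [Real.cos_pi_div_three] at this
  have hlaw := EuclideanGeometry.law_cos s p q
  have hqp : dist q p = dist p q := dist_comm q p
  have hsp' : dist s p = dist p s := dist_comm s p
  rw [hqp, hsp'] at hlaw
  have hpq : 0 < dist p q := lt_of_le_of_lt dist_nonneg hdist
  have h1 : dist p s * dist p q < 2 * dist p s * dist p q * Real.cos (∠ s p q) := by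
    nlinarith [mul_pos (hsp' ▸ hps) hpq]
  have h2 : dist p s * dist p s < dist p s * dist p q := by
    nlinarith [hsp' ▸ hps]
  nlinarith [dist_nonneg (x := s) (y := q)]
end

section
/- Let G be a finite directed graph on a finite point set S in a Euclidean space. Suppose that for every pair of distinct points p, q ∈ S with no edge from p to q, there exists an edge p → r in G with dist(r, q) < dist(p, q). Then for every pair p, q ∈ S there exists a path p = n₀, n₁, ..., n_L = q in G such that dist(n_l, q) is strictly decreasing in l. -/
open EuclideanGeometry

theorem stmt_9 {d : ℕ} (S : Finset (EuclideanSpace ℝ (Fin d)))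
    (E : EuclideanSpace ℝ (Fin d) → EuclideanSpace ℝ (Fin d) → Prop)
    (hE : ∀ p q, E p q → p ∈ S ∧ q ∈ S)
    (h : ∀ p ∈ S, ∀ q ∈ S, p ≠ q → ¬ E p q → ∃ r, E p r ∧ dist r q < dist p q)
    (p q : EuclideanSpace ℝ (Fin d)) (hp : p ∈ S) (hq : q ∈ S) :
    ∃ (L : ℕ) (n : ℕ → EuclideanSpace ℝ (Fin d)),
      n 0 = p ∧ n L = q ∧
      (∀ l < L, E (n l) (n (l + 1))) ∧
      (∀ l < L, dist (n (l + 1)) q < dist (n l) q) := by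
  classical
  have key : ∀ N : ℕ, ∀ p, p ∈ S →
      (S.filter (fun x => dist x q < dist p q)).card ≤ N →
      ∃ (L : ℕ) (n : ℕ → EuclideanSpace ℝ (Fin d)),
        n 0 = p ∧ n L = q ∧
        (∀ l < L, E (n l) (n (l + 1))) ∧
        (∀ l < L, dist (n (l + 1)) q < dist (n l) q) := by
    intro N
    induction N with
    | zero =>
      intro p hp hcard
      by_cases hpq : p = q
      · exact ⟨0, fun _ => q, by simp [hpq], rfl, by simp, by simp⟩
      by_cases hEpq : E p q
      · refine ⟨1, fun l => if l = 0 then p else q, by simp, by simp, ?_, ?_⟩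
        · intro l hl; interval_cases l; simpa using hEpq
        · intro l hl; interval_cases l
          simpa [dist_comm] using dist_pos.mpr hpq
      · obtain ⟨r, hpr, hr⟩ := h p hp q hq hpq hEpq
        have hrS : r ∈ S := (hE p r hpr).2
        have : r ∈ S.filter (fun x => dist x q < dist p q) :=
          Finset.mem_filter.mpr ⟨hrS, hr⟩
        have := Finset.card_pos.mpr ⟨r, this⟩
        omega
    | succ N ih =>
      intro p hp hcard
      by_cases hpq : p = q
      · exact ⟨0, fun _ => q, by simp [hpq], rfl, by simp, by simp⟩
      by_cases hEpq : E p q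
      · refine ⟨1, fun l => if l = 0 then p else q, by simp, by simp, ?_, ?_⟩
        · intro l hl; interval_cases l; simpa using hEpq
        · intro l hl; interval_cases l
          simpa [dist_comm] using dist_pos.mpr hpq
      · obtain ⟨r, hpr, hr⟩ := h p hp q hq hpq hEpq
        have hrS : r ∈ S := (hE p r hpr).2
        have hsub : S.filter (fun x => dist x q < dist r q) ⊂
            S.filter (fun x => dist x q < dist p q) := by
          refine Finset.ssubset_iff_of_subset ?_ |>.mpr ?_
          · intro x hx
            rw [Finset.mem_filter] at hx ⊢
            exact ⟨hx.1, hx.2.trans hr⟩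
          · exact ⟨r, Finset.mem_filter.mpr ⟨hrS, hr⟩, by simp⟩
        have hcard' : (S.filter (fun x => dist x q < dist r q)).card ≤ N := by
          have := Finset.card_lt_card hsub
          omega
        obtain ⟨L', n', h0, hL, hEdge, hDist⟩ := ih r hrS hcard'
        refine ⟨L' + 1, fun l => if l = 0 then p else n' (l - 1), by simp, by simp [hL], ?_, ?_⟩
        · intro l hl
          rcases Nat.eq_zero_or_pos l with rfl | hlpos
          · simpa [h0] using hpr
          · have hne : l ≠ 0 := hlpos.ne'
            have : l - 1 < L' := by omega
            simpa [hne, Nat.sub_add_cancel hlpos] using hEdge (l - 1) this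
        · intro l hl
          rcases Nat.eq_zero_or_pos l with rfl | hlpos
          · simpa [h0] using hr
          · have hne : l ≠ 0 := hlpos.ne'
            have : l - 1 < L' := by omega
            simpa [hne, Nat.sub_add_cancel hlpos] using hDist (l - 1) this
  exact key (S.filter (fun x => dist x q < dist p q)).card p hp le_rfl
end

section
/- Every SSG is strongly connected: for any two distinct points p, q in a finite set S ⊂ ℝ^d, an SSG on S (for any parameter 0 < α ≤ π/3) contains a directed path from p to q. -/
open EuclideanGeometry Real

lemma ssg_dist_dec {d : ℕ} {r p q : EuclideanSpace ℝ (Fin d)}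
    (h1 : dist p r < dist p q) (h2 : ∠ r p q < π / 3) :
    dist r q < dist p q := by
  have hrp : r ≠ p := by
    rintro rfl
    rw [EuclideanGeometry.angle_self_left] at h2
    linarith [Real.pi_pos]
  have hc : (1 : ℝ) / 2 < Real.cos (∠ r p q) := by
    have := Real.cos_lt_cos_of_nonneg_of_le_pi (EuclideanGeometry.angle_nonneg r p q)
      (by linarith [Real.pi_pos]) h2
    rwa [Real.cos_pi_div_three] at this
  have hlc := EuclideanGeometry.law_cos r p q
  have ha : 0 < dist r p := dist_pos.2 hrp
  rw [dist_comm r p] at hlc ha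
  rw [dist_comm q p] at hlc
  have hb : 0 < dist p q := ha.trans h1
  have h3 : dist r q ^ 2 < dist p q ^ 2 := by
    have h4 : dist p r * dist p q * (1/2) < dist p r * dist p q * Real.cos (∠ r p q) := by
      have := mul_pos ha hb
      nlinarith
    nlinarith
  nlinarith [dist_nonneg (x := r) (y := q), dist_nonneg (x := p) (y := q)]

theorem stmt_10 {d : ℕ} (α : ℝ) (hα0 : 0 < α) (hα : α ≤ π / 3)
    (S : Finset (EuclideanSpace ℝ (Fin d)))
    (E : EuclideanSpace ℝ (Fin d) → EuclideanSpace ℝ (Fin d) → Prop)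
    (hE : ∀ p q, E p q → p ∈ S ∧ q ∈ S)
    (hSSG : ∀ p ∈ S, ∀ q ∈ S, q ≠ p →
      E p q ∨ ∃ r, E p r ∧ dist p r < dist p q ∧ ∠ r p q < α)
    (p q : EuclideanSpace ℝ (Fin d)) (hp : p ∈ S) (hq : q ∈ S) (hpq : p ≠ q) :
    ∃ (L : ℕ) (n : ℕ → EuclideanSpace ℝ (Fin d)),
      n 0 = p ∧ n L = q ∧ ∀ l < L, E (n l) (n (l + 1)) := by
  classical
  have key : ∀ N : ℕ, ∀ p, p ∈ S → p ≠ q →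
      (S.filter (fun s => dist s q < dist p q)).card ≤ N →
      ∃ (L : ℕ) (n : ℕ → EuclideanSpace ℝ (Fin d)),
        n 0 = p ∧ n L = q ∧ ∀ l < L, E (n l) (n (l + 1)) := by
    intro N
    induction N with
    | zero =>
      intro p hp hpq hcard
      rcases hSSG p hp q hq (Ne.symm hpq) with hEpq | ⟨r, hEpr, hd, hang⟩
      · exact ⟨1, fun l => if l = 0 then p else q, by simp, by simp,
          by intro l hl; interval_cases l; simpa using hEpq⟩
      · exfalso
        have hr : dist r q < dist p q := ssg_dist_dec hd (lt_of_lt_of_le hang hα)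
        have hrS : r ∈ S := (hE p r hEpr).2
        have : r ∈ S.filter (fun s => dist s q < dist p q) := Finset.mem_filter.2 ⟨hrS, hr⟩
        have := Finset.card_pos.2 ⟨r, this⟩
        omega
    | succ N ih =>
      intro p hp hpq hcard
      rcases hSSG p hp q hq (Ne.symm hpq) with hEpq | ⟨r, hEpr, hd, hang⟩
      · exact ⟨1, fun l => if l = 0 then p else q, by simp, by simp,
          by intro l hl; interval_cases l; simpa using hEpq⟩
      · have hr : dist r q < dist p q := ssg_dist_dec hd (lt_of_lt_of_le hang hα)
        have hrS : r ∈ S := (hE p r hEpr).2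
        by_cases hrq : r = q
        · subst hrq
          exact ⟨1, fun l => if l = 0 then p else r, by simp, by simp,
            by intro l hl; interval_cases l; simpa using hEpr⟩
        · have hsub : S.filter (fun s => dist s q < dist r q) ⊂
              S.filter (fun s => dist s q < dist p q) := by
            constructor
            · intro s hs
              rw [Finset.mem_filter] at hs ⊢
              exact ⟨hs.1, hs.2.trans hr⟩
            · intro hcon
              have : r ∈ S.filter (fun s => dist s q < dist r q) :=
                hcon (Finset.mem_filter.2 ⟨hrS, hr⟩)
              simp at this
          have hcard' : (S.filter (fun s => dist s q < dist r q)).card ≤ N := by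
            have := Finset.card_lt_card hsub
            omega
          obtain ⟨L, n, hn0, hnL, hne⟩ := ih r hrS hrq hcard'
          refine ⟨L + 1, fun l => if l = 0 then p else n (l - 1), by simp, by simp [hnL], ?_⟩
          intro l hl
          rcases Nat.eq_zero_or_pos l with rfl | hl0
          · simpa [hn0] using hEpr
          · have h1 : l ≠ 0 := hl0.ne'
            have h2 : l + 1 ≠ 0 := by omega
            simp only [h1, h2, if_false]
            have : l - 1 < L := by omega
            have := hne (l - 1) this
            have heq : l - 1 + 1 = l + 1 - 1 := by omega
            rwa [heq] at this
  exact key S.card p hp hpq (Finset.card_le_card (Finset.filter_subset _ _))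
end

section
/- An SSG with parameter α ≤ π/3 is a monotonic search network: for every pair of distinct points p, q in the finite point set S, there is a directed path p = n₀, ..., n_L = q in the SSG with dist(n_{l+1}, q) < dist(n_l, q) for all 0 ≤ l < L. -/
open EuclideanGeometry Real

lemma step_lemma {d : ℕ} {α : ℝ} (hα : α ≤ π / 3)
    {p q r : EuclideanSpace ℝ (Fin d)}
    (h1 : dist p r < dist p q) (h2 : ∠ r p q < α) :
    dist r q < dist p q := by
  have hπ := Real.pi_pos
  have hrp : r ≠ p := by
    rintro rfl
    rw [EuclideanGeometry.angle_self_left] at h2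
    linarith
  have hpr : 0 < dist p r := dist_pos.2 (Ne.symm hrp)
  have hang0 : 0 ≤ ∠ r p q := EuclideanGeometry.angle_nonneg r p q
  have hangpi : ∠ r p q ≤ π := EuclideanGeometry.angle_le_pi r p q
  have hcos : Real.cos (∠ r p q) > 1 / 2 := by
    have h3 : ∠ r p q < π / 3 := lt_of_lt_of_le h2 hα
    have := Real.cos_lt_cos_of_nonneg_of_le_pi hang0 (by linarith) h3
    rwa [Real.cos_pi_div_three] at this
  have hlaw := EuclideanGeometry.law_cos r p q
  rw [dist_comm r p, dist_comm q p] at hlaw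
  have hb : 0 < dist p q := lt_trans hpr h1
  have key1 : 0 < dist p r * (dist p q - dist p r) := mul_pos hpr (by linarith)
  have key2 : 0 < dist p r * dist p q * (2 * Real.cos (∠ r p q) - 1) :=
    mul_pos (mul_pos hpr hb) (by linarith)
  nlinarith [dist_nonneg (x := r) (y := q), dist_nonneg (x := p) (y := q)]

theorem stmt_11 {d : ℕ} (α : ℝ) (hα0 : 0 < α) (hα : α ≤ π / 3)
    (S : Finset (EuclideanSpace ℝ (Fin d)))
    (E : EuclideanSpace ℝ (Fin d) → EuclideanSpace ℝ (Fin d) → Prop)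
    (hE : ∀ p q, E p q → p ∈ S ∧ q ∈ S)
    (hSSG : ∀ p ∈ S, ∀ q ∈ S, q ≠ p →
      E p q ∨ ∃ r, E p r ∧ dist p r < dist p q ∧ ∠ r p q < α)
    (p q : EuclideanSpace ℝ (Fin d)) (hp : p ∈ S) (hq : q ∈ S) (hpq : p ≠ q) :
    ∃ (L : ℕ) (n : ℕ → EuclideanSpace ℝ (Fin d)),
      n 0 = p ∧ n L = q ∧
      (∀ l < L, E (n l) (n (l + 1))) ∧
      (∀ l < L, dist (n (l + 1)) q < dist (n l) q) := by
  classical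
  -- strong induction on the number of points of S strictly closer to q than p
  suffices H : ∀ k : ℕ, ∀ p ∈ S, p ≠ q →
      (S.filter (fun s => dist s q < dist p q)).card ≤ k →
      ∃ (L : ℕ) (n : ℕ → EuclideanSpace ℝ (Fin d)),
        n 0 = p ∧ n L = q ∧
        (∀ l < L, E (n l) (n (l + 1))) ∧
        (∀ l < L, dist (n (l + 1)) q < dist (n l) q) by
    exact H _ p hp hpq le_rfl
  intro k
  induction k with
  | zero =>
      intro p hp hpq hcard
      -- q itself is closer to q than p, so the filter is nonempty: contradiction
      exfalso
      have hqmem : q ∈ S.filter (fun s => dist s q < dist p q) := by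
        simp [Finset.mem_filter, hq, dist_pos.2 hpq]
      have := Finset.card_pos.2 ⟨q, hqmem⟩
      omega
  | succ k ih =>
      intro p hp hpq hcard
      rcases hSSG p hp q hq (Ne.symm hpq) with hEpq | ⟨r, hEr, hdist, hang⟩
      · refine ⟨1, fun l => if l = 0 then p else q, by simp, by simp, ?_, ?_⟩
        · intro l hl
          interval_cases l
          simpa using hEpq
        · intro l hl
          interval_cases l
          simpa using dist_pos.2 hpq
      · have hr : r ∈ S := (hE p r hEr).2
        have hrq : dist r q < dist p q := step_lemma hα hdist hang
        by_cases hrq' : r = q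
        · rw [hrq'] at hEr
          refine ⟨1, fun l => if l = 0 then p else q, by simp, by simp, ?_, ?_⟩
          · intro l hl
            interval_cases l
            simpa using hEr
          · intro l hl
            interval_cases l
            simpa using dist_pos.2 hpq
        · -- recurse on r
          have hsub : S.filter (fun s => dist s q < dist r q) ⊆
              (S.filter (fun s => dist s q < dist p q)).erase r := by
            intro s hs
            rw [Finset.mem_filter] at hs
            rw [Finset.mem_erase, Finset.mem_filter]
            refine ⟨?_, hs.1, lt_trans hs.2 hrq⟩
            rintro rfl
            exact lt_irrefl _ hs.2
          have hrmem : r ∈ S.filter (fun s => dist s q < dist p q) := by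
            simp [Finset.mem_filter, hr, hrq]
          have hcard' : (S.filter (fun s => dist s q < dist r q)).card ≤ k := by
            have h1 := Finset.card_le_card hsub
            have h2 := Finset.card_erase_of_mem hrmem
            omega
          obtain ⟨L, n, hn0, hnL, hne, hnd⟩ := ih r hr hrq' hcard'
          refine ⟨L + 1, fun l => if l = 0 then p else n (l - 1), by simp, by simp [hnL], ?_, ?_⟩
          · intro l hl
            cases l with
            | zero => simpa [hn0] using hEr
            | succ m =>
                have hm : m < L := by omega
                simpa using hne m hm
          · intro l hl
            cases l with
            | zero => simpa [hn0] using hrq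
            | succ m =>
                have hm : m < L := by omega
                simpa using hnd m hm
end

section
/- For a point p in a finite set S ⊂ ℝ^d in general position, the out-degree of p produced by the SSG pruning procedure with angle parameter α is at most the maximum cardinality of a set of unit vectors in ℝ^d with pairwise angles at least α; in particular it is bounded by a constant depending only on α and d, independent of |S|. -/
open EuclideanGeometry Real
open scoped Classical

/-- One pass of the SSG pruning procedure: process candidates in order,
accepting a candidate iff its angle at `p` with every previously accepted
neighbor is at least `α`. -/
noncomputable def ssgPruneAux {d : ℕ} (p : EuclideanSpace ℝ (Fin d)) (α : ℝ) :
    List (EuclideanSpace ℝ (Fin d)) → List (EuclideanSpace ℝ (Fin d)) →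
      List (EuclideanSpace ℝ (Fin d))
  | acc, [] => acc
  | acc, q :: rest =>
      if ∀ r ∈ acc, α ≤ ∠ r p q then ssgPruneAux p α (acc ++ [q]) rest
      else ssgPruneAux p α acc rest

/-- The SSG pruning procedure applied to the (sorted) candidate list `L`. -/
noncomputable def ssgPrune {d : ℕ} (p : EuclideanSpace ℝ (Fin d)) (α : ℝ)
    (L : List (EuclideanSpace ℝ (Fin d))) : List (EuclideanSpace ℝ (Fin d)) :=
  ssgPruneAux p α [] L

/-!
The neighbours accepted by SSG pruning at `p` pairwise subtend an angle at least `α` at `p`, so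
their unit directions `(q - p) / ‖q - p‖` form an `α`-separated family on the unit sphere.
For unit vectors `‖u - v‖² = 2 - 2 cos ∠(u, v)`, so angular separation is metric separation,
and a separated subset of the compact sphere is bounded in size by a covering number of the sphere.
-/

open Metric in
theorem TotallyBounded.exists_card_le_of_le_dist {X : Type*} [PseudoMetricSpace X] {s : Set X}
    (hs : TotallyBounded s) {δ : ℝ} (hδ : 0 < δ) :
    ∃ m : ℕ, ∀ T : Finset X, ↑T ⊆ s →
      (∀ x ∈ T, ∀ y ∈ T, x ≠ y → δ ≤ dist x y) → T.card ≤ m := by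
  set ε := (δ / 4).toNNReal
  have hε : (ε : ℝ) = δ / 4 := Real.coe_toNNReal _ (by positivity)
  obtain ⟨N, -, hN, hcover⟩ :=
    exists_finite_isCover_of_totallyBounded (ε := ε)
      (Real.toNNReal_pos.mpr (by positivity)).ne' hs
  refine ⟨hN.toFinset.card, fun T hTs hT => ?_⟩
  have hsep : IsSeparated (2 * ε : NNReal) (T : Set X) := by
    intro x hx y hy hxy
    rw [edist_nndist, ENNReal.coe_lt_coe, ← NNReal.coe_lt_coe, coe_nndist, NNReal.coe_mul,
      NNReal.coe_ofNat, hε]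
    linarith [hT x hx y hy hxy]
  have : (T : Set X).encard ≤ N.encard :=
    calc (T : Set X).encard ≤ packingNumber (2 * ε) s := hsep.encard_le_packingNumber hTs
      _ ≤ externalCoveringNumber ε s := packingNumber_two_mul_le_externalCoveringNumber ε s
      _ ≤ N.encard := hcover.externalCoveringNumber_le_encard
  rw [Set.encard_coe_eq_coe_finsetCard, hN.encard_eq_coe_toFinset_card] at this
  exact_mod_cast this

namespace InnerProductGeometry

variable {V : Type*} [NormedAddCommGroup V] [InnerProductSpace ℝ V]

theorem dist_sq_eq_two_sub_two_mul_cos_angle {u v : V} (hu : ‖u‖ = 1) (hv : ‖v‖ = 1) :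
    dist u v ^ 2 = 2 - 2 * Real.cos (angle u v) := by
  rw [dist_eq_norm, sq, norm_sub_sq_eq_norm_sq_add_norm_sq_sub_two_mul_norm_mul_norm_mul_cos_angle,
    hu, hv]
  ring

theorem exists_card_le_of_le_angle [FiniteDimensional ℝ V] {α : ℝ} (hα : 0 < α) :
    ∃ m : ℕ, ∀ T : Finset V, (∀ u ∈ T, ‖u‖ = 1) →
      (∀ u ∈ T, ∀ v ∈ T, u ≠ v → α ≤ angle u v) → T.card ≤ m := by
  -- `cos` is antitone only on `[0, π]`, where all angles lie
  set β := min α π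
  have hβ : 0 < β := lt_min hα pi_pos
  have hcos : Real.cos β < 1 := by
    simpa using cos_lt_cos_of_nonneg_of_le_pi le_rfl (min_le_right α π) hβ
  obtain ⟨m, hm⟩ := (isCompact_sphere (0 : V) 1).totallyBounded.exists_card_le_of_le_dist
    (Real.sqrt_pos.mpr (by linarith : 0 < 2 - 2 * Real.cos β))
  refine ⟨m, fun T hT1 hTα => hm T (fun u hu => by simpa using hT1 u hu) ?_⟩
  intro u hu v hv huv
  have hcos_angle : Real.cos (angle u v) ≤ Real.cos β :=
    cos_le_cos_of_nonneg_of_le_pi hβ.le (angle_le_pi u v)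
      ((min_le_left α π).trans (hTα u hu v hv huv))
  rw [Real.sqrt_le_left dist_nonneg, dist_sq_eq_two_sub_two_mul_cos_angle (hT1 u hu) (hT1 v hv)]
  linarith

end InnerProductGeometry

section Direction

variable {V : Type*} [NormedAddCommGroup V] [InnerProductSpace ℝ V]

noncomputable def unitDirection (p q : V) : V := ‖q - p‖⁻¹ • (q - p)

theorem norm_unitDirection {p q : V} (h : q ≠ p) : ‖unitDirection p q‖ = 1 := by
  rw [unitDirection, norm_smul, norm_inv, norm_norm,
    inv_mul_cancel₀ (norm_ne_zero_iff.mpr (sub_ne_zero.mpr h))]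

theorem angle_unitDirection {p q r : V} (hq : q ≠ p) (hr : r ≠ p) :
    InnerProductGeometry.angle (unitDirection p q) (unitDirection p r) = ∠ q p r := by
  rw [unitDirection, unitDirection,
    InnerProductGeometry.angle_smul_left_of_pos _ _
      (inv_pos.mpr (norm_pos_iff.mpr (sub_ne_zero.mpr hq))),
    InnerProductGeometry.angle_smul_right_of_pos _ _
      (inv_pos.mpr (norm_pos_iff.mpr (sub_ne_zero.mpr hr)))]
  rfl

theorem nodup_map_unitDirection {p : V} {α : ℝ} (hα : 0 < α) {L : List V}
    (hL : ∀ q ∈ L, q ≠ p) (h : L.Pairwise fun a b => α ≤ ∠ a p b) :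
    (L.map (unitDirection p)).Nodup := by
  refine List.pairwise_map.mpr (h.imp_of_mem fun ha hb hab heq => ?_)
  have hb0 : unitDirection p _ ≠ 0 :=
    norm_ne_zero_iff.mp ((norm_unitDirection (hL _ hb)).trans_ne one_ne_zero)
  rw [← angle_unitDirection (hL _ ha) (hL _ hb), heq, InnerProductGeometry.angle_self hb0] at hab
  linarith

end Direction

section SSG

variable {d : ℕ} {p : EuclideanSpace ℝ (Fin d)} {α : ℝ}

theorem ssgPruneAux_subset (acc L : List (EuclideanSpace ℝ (Fin d))) :
    ssgPruneAux p α acc L ⊆ acc ++ L := by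
  fun_induction ssgPruneAux p α acc L with
  | case1 acc => simp
  | case2 acc q rest _ ih => exact List.Subset.trans ih (by simp)
  | case3 acc q rest _ ih => exact List.Subset.trans ih (by simp)

theorem ssgPruneAux_pairwise (acc L : List (EuclideanSpace ℝ (Fin d)))
    (h : acc.Pairwise fun a b => α ≤ ∠ a p b) :
    (ssgPruneAux p α acc L).Pairwise fun a b => α ≤ ∠ a p b := by
  fun_induction ssgPruneAux p α acc L with
  | case1 acc => exact h
  | case2 acc q rest hq ih =>
    exact ih (List.pairwise_append.mpr ⟨h, List.pairwise_singleton _ _, by simpa using hq⟩)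
  | case3 acc q rest _ ih => exact ih h

theorem ssgPrune_pairwise (L : List (EuclideanSpace ℝ (Fin d))) :
    (ssgPrune p α L).Pairwise fun a b => α ≤ ∠ a p b :=
  ssgPruneAux_pairwise [] L List.Pairwise.nil

theorem ssgPrune_subset (L : List (EuclideanSpace ℝ (Fin d))) : ssgPrune p α L ⊆ L :=
  ssgPruneAux_subset [] L

theorem le_angle_of_mem_ssgPrune {L : List (EuclideanSpace ℝ (Fin d))}
    {q r : EuclideanSpace ℝ (Fin d)} (hq : q ∈ ssgPrune p α L) (hr : r ∈ ssgPrune p α L)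
    (hqr : q ≠ r) : α ≤ ∠ q p r := by
  have : Std.Symm fun a b => α ≤ ∠ a p b := ⟨fun a b h => by rwa [angle_comm]⟩
  exact (ssgPrune_pairwise L).forall hq hr hqr

end SSG

open InnerProductGeometry in
theorem stmt_13 (d : ℕ) (α : ℝ) (hα0 : 0 < α) :
    ∃ m : ℕ,
      (∀ T : Finset (EuclideanSpace ℝ (Fin d)),
        (∀ u ∈ T, ‖u‖ = 1) →
        (∀ u ∈ T, ∀ v ∈ T, u ≠ v → α ≤ InnerProductGeometry.angle u v) →
        T.card ≤ m) ∧
      ∀ (p : EuclideanSpace ℝ (Fin d)) (L : List (EuclideanSpace ℝ (Fin d))),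
        (L.Pairwise fun a b => dist p a < dist p b) →
        (∀ q ∈ L, q ≠ p) →
        (ssgPrune p α L).length ≤ m := by
  obtain ⟨m, hm⟩ := exists_card_le_of_le_angle (V := EuclideanSpace ℝ (Fin d)) hα0
  refine ⟨m, hm, fun p L _ hLp => ?_⟩
  have hp : ∀ q ∈ ssgPrune p α L, q ≠ p := fun q hq => hLp q (ssgPrune_subset L hq)
  rw [← List.length_map (f := unitDirection p),
    ← List.toFinset_card_of_nodup (nodup_map_unitDirection hα0 hp (ssgPrune_pairwise L))]
  refine hm _ ?_ ?_
  · simp only [List.mem_toFinset, List.mem_map]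
    rintro _ ⟨q, hq, rfl⟩
    exact norm_unitDirection (hp q hq)
  · simp only [List.mem_toFinset, List.mem_map]
    rintro _ ⟨q, hq, rfl⟩ _ ⟨r, hr, rfl⟩ hne
    rw [angle_unitDirection (hp q hq) (hp r hr)]
    exact le_angle_of_mem_ssgPrune hq hr (ne_of_apply_ne _ hne)
end

section
/- Let p, q, r be points in a Euclidean space with r the closest point of a finite set S to q, and let s ∈ S satisfy ∠spq < π/3 and dist(p,s) < dist(p,q). Then dist(s,q) < dist(p,q), and consequently dist(r,q) ≤ dist(s,q) < dist(p,q). -/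
open EuclideanGeometry Real

theorem stmt_15 {d : ℕ} (S : Finset (EuclideanSpace ℝ (Fin d)))
    (q p r s : EuclideanSpace ℝ (Fin d))
    (hr : r ∈ S) (hmin : ∀ x ∈ S, dist r q ≤ dist x q)
    (hs : s ∈ S)
    (hangle : ∠ s p q < π / 3) (hdist : dist p s < dist p q) :
    dist r q ≤ dist s q ∧ dist s q < dist p q := by
  refine ⟨hmin s hs, ?_⟩
  have hsp : s ≠ p := by
    rintro rfl
    rw [EuclideanGeometry.angle, vsub_self, InnerProductGeometry.angle_zero_left] at hangle
    linarith [Real.pi_pos]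
  have ha : (0:ℝ) < dist p s := by
    rw [dist_comm]; exact dist_pos.mpr hsp
  have hb : (0:ℝ) < dist p q := lt_trans ha hdist
  have hcos : (1:ℝ)/2 < Real.cos (∠ s p q) := by
    have h1 : Real.cos (π/3) < Real.cos (∠ s p q) := by
      apply Real.cos_lt_cos_of_nonneg_of_le_pi (EuclideanGeometry.angle_nonneg s p q) _ hangle
      linarith [Real.pi_pos]
    rwa [Real.cos_pi_div_three] at h1
  have hlc := EuclideanGeometry.law_cos s p q
  rw [dist_comm s p, dist_comm q p] at hlc
  nlinarith [dist_nonneg (x := s) (y := q), mul_pos ha hb, mul_lt_mul_of_pos_left hcos (mul_pos ha hb), mul_lt_mul_of_pos_right hdist ha]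
end
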